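/- Let R be a commutative ring, n ≥ 1, and let K and L be submodules of Rⁿ with Rⁿ = K ⊕ L (internal direct sum), where L is a finitely generated projective R-module of constant rank 1. Let e₁ denote the first standard basis vector of Rⁿ, written e₁ = v + w with v ∈ K and w ∈ L. Let λ ∈ R and let μ ∈ R be such that 1 − μ is a unit of R. If v + λ·w = μ·e₁, then v = 0, λ = μ, and L equals the cyclic submodule R·e₁ generated by e₁. -/
import Mathlib


/-- A finitely generated projective `R`-module of constant rank 1: the localization at every
prime ideal of `R` is a free module of rank 1. -/
def IsRankOneProjective (R : Type*) [CommRing R] (M : Type*) [AddCommGroup M] [Module R M] :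
    Prop :=
  Module.Finite R M ∧ Module.Projective R M ∧
    ∀ (p : Ideal R) (hp : p.IsPrime),
      haveI := hp
      Module.Free (Localization.AtPrime p) (LocalizedModule p.primeCompl M) ∧
        Module.finrank (Localization.AtPrime p) (LocalizedModule p.primeCompl M) = 1

/-- Over a local ring, a linear map out of a free module of rank 1 that admits a
right inverse with nontrivial target is injective. -/
lemma aux_injective_of_rightInverse {S : Type*} [CommRing S] [IsLocalRing S]
    {M N : Type*} [AddCommGroup M] [Module S M] [AddCommGroup N] [Module S N]
    [Module.Free S M] (hr : Module.finrank S M = 1) [Nontrivial N]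
    (F : M →ₗ[S] N) (G : N →ₗ[S] M) (hFG : ∀ y, F (G y) = y) :
    Function.Injective F := by
  classical
  -- a basis of `M` indexed by a singleton type
  have hrank : Module.rank S M = 1 := by
    have : (Module.rank S M).toNat = 1 := hr
    exact Cardinal.toNat_eq_one.mp this
  have hcard : (Cardinal.mk (Module.Free.ChooseBasisIndex S M)) = 1 := by
    rw [← Module.Free.rank_eq_card_chooseBasisIndex, hrank]
  obtain ⟨hsub, hne⟩ := Cardinal.eq_one_iff_unique.mp hcard
  haveI : Unique (Module.Free.ChooseBasisIndex S M) :=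
    uniqueOfSubsingleton (Classical.arbitrary _)
  set b := Module.Free.chooseBasis S M with hb
  set i : Module.Free.ChooseBasisIndex S M := default
  have hbase : ∀ x : M, x = b.repr x i • b i := by
    intro x
    conv_lhs => rw [← b.sum_repr x]
    rw [Fintype.sum_unique]
  set c : S := b.repr (G (F (b i))) i with hc
  have he : ∀ x : M, G (F x) = c • x := by
    intro x
    have h1 : G (F (b i)) = c • b i := hbase _
    conv_lhs => rw [hbase x, map_smul, map_smul, h1]
    rw [smul_comm, ← hbase x]
  have hidem : c * c = c := by
    have h1 : G (F (G (F (b i)))) = G (F (b i)) := by rw [hFG]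
    rw [he, he] at h1
    have h2 := congrArg (fun z => b.repr z i) h1
    simpa [smul_smul, Module.Basis.repr_self, mul_assoc] using h2
  have hc1 : c = 1 := by
    rcases IsLocalRing.isUnit_or_isUnit_one_sub_self c with h | h
    · exact h.mul_left_cancel (by rw [mul_one, hidem])
    · have hc0 : c = 0 := by
        have h0 : (1 - c) * c = 0 := by
          have : c - c * c = 0 := by rw [hidem]; ring
          calc (1 - c) * c = c - c * c := by ring
          _ = 0 := this
        rcases h with ⟨u, hu⟩
        have := congrArg (fun z => (↑u⁻¹ : S) * z) h0
        simpa [← hu, ← mul_assoc] using this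
      exfalso
      obtain ⟨y, hy⟩ := exists_ne (0 : N)
      apply hy
      have hGy : G y = 0 := by
        have h2 := he (G y)
        rw [hFG, hc0, zero_smul] at h2
        exact h2
      rw [← hFG y, hGy, map_zero]
  intro x y hxy
  have h2 : G (F x) = G (F y) := by rw [hxy]
  rwa [he, he, hc1, one_smul, one_smul] at h2

/-- if `Rⁿ = K ⊕ L` with `L` rank-1 projective, `e₁ = v + w` with `v ∈ K`,
`w ∈ L`, `1 - μ` a unit, and `v + λ • w = μ • e₁`, then `v = 0`, `λ = μ` and `L = R·e₁`. -/
theorem eq_span_single_of_decomposition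
    (R : Type*) [CommRing R] (n : ℕ) (hn : 1 ≤ n)
    (K L : Submodule R (Fin n → R))
    (hdisj : K ⊓ L = ⊥) (hsup : K ⊔ L = ⊤)
    (hL : IsRankOneProjective R L)
    (v w : Fin n → R) (hv : v ∈ K) (hw : w ∈ L)
    (he : Pi.single (⟨0, hn⟩ : Fin n) (1 : R) = v + w)
    (lam mu : R) (hmu : IsUnit (1 - mu))
    (heq : v + lam • w = mu • (Pi.single (⟨0, hn⟩ : Fin n) (1 : R) : Fin n → R)) :
    v = 0 ∧ lam = mu ∧
      L = Submodule.span R {Pi.single (⟨0, hn⟩ : Fin n) (1 : R)} := by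
  classical
  set i0 : Fin n := ⟨0, hn⟩
  set E : Fin n → R := Pi.single i0 (1 : R) with hE
  -- Step 1: `(1-μ)•v = (μ-λ)•w`
  have key : (1 - mu) • v = (mu - lam) • w := by
    funext k
    have h1 := congrFun heq k
    have h2 := congrFun he k
    simp only [Pi.add_apply, Pi.smul_apply, smul_eq_mul] at h1 h2 ⊢
    rw [h2] at h1
    linear_combination h1
  -- the common value lies in `K ⊓ L = ⊥`
  have hmem : (1 - mu) • v ∈ K ⊓ L := by
    refine ⟨K.smul_mem _ hv, ?_⟩
    rw [key]; exact L.smul_mem _ hw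
  rw [hdisj, Submodule.mem_bot] at hmem
  -- Step 2: `v = 0`
  have hv0 : v = 0 := by
    obtain ⟨u, hu⟩ := hmu
    have := congrArg (fun z => (↑u⁻¹ : R) • z) hmem
    simpa [← hu, smul_smul] using this
  -- Step 3: `w = e₁`
  have hwE : w = E := by rw [he, hv0, zero_add]
  -- Step 4: `λ = μ`
  have hlam : lam = mu := by
    have h0 : (mu - lam) • w = 0 := by rw [← key, hmem]
    rw [hwE] at h0
    have h1 := congrFun h0 i0
    simp only [Pi.smul_apply, hE, Pi.single_eq_same, smul_eq_mul, mul_one,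
      Pi.zero_apply] at h1
    exact (sub_eq_zero.mp h1).symm
  -- Step 5: `e₁ ∈ L`
  have hEL : E ∈ L := hwE ▸ hw
  -- the coordinate projection restricted to `L`, and its right inverse
  set f : L →ₗ[R] R := (LinearMap.proj i0).comp L.subtype with hf
  set l : R →ₗ[R] L := LinearMap.toSpanSingleton R L ⟨E, hEL⟩ with hl
  have hfl : ∀ r : R, f (l r) = r := by
    intro r
    simp [hf, hl, LinearMap.toSpanSingleton_apply, hE, Pi.single_eq_same]
  -- injectivity of `f` is checked locally at every maximal ideal
  have hinj : Function.Injective f := by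
    apply injective_of_localized_maximal
    intro J hJ
    haveI : J.IsPrime := hJ.isPrime
    obtain ⟨hfree, hrank⟩ := hL.2.2 J hJ.isPrime
    haveI := hfree
    haveI : Nontrivial (LocalizedModule J.primeCompl R) := by
      refine ⟨⟨LocalizedModule.mk 1 1, 0, fun h => ?_⟩⟩
      rw [show (0 : LocalizedModule J.primeCompl R) = LocalizedModule.mk 0 1 from
        (LocalizedModule.zero_mk 1).symm, LocalizedModule.mk_eq] at h
      obtain ⟨u, hu⟩ := h
      simp only [one_smul, smul_zero, Submonoid.smul_def, smul_eq_mul, mul_one] at hu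
      exact u.2 (hu ▸ J.zero_mem)
    refine aux_injective_of_rightInverse hrank
      (LocalizedModule.map J.primeCompl f) (LocalizedModule.map J.primeCompl l) ?_
    intro z
    induction z using LocalizedModule.induction_on with
    | h m s => simp [hfl]
  -- Step 6: `L = span {e₁}`
  refine ⟨hv0, hlam, le_antisymm ?_ ?_⟩
  · intro x hx
    have h0 : f (⟨x, hx⟩ - (x i0) • ⟨E, hEL⟩) = 0 := by
      simp [hf, hE, Pi.single_eq_same]
    have h1 : (⟨x, hx⟩ : L) - (x i0) • ⟨E, hEL⟩ = 0 := by
      apply hinj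
      rw [h0, map_zero]
    have h2 : (⟨x, hx⟩ : L) = (x i0) • ⟨E, hEL⟩ := by
      rwa [sub_eq_zero] at h1
    have h3 : x = (x i0) • E := congrArg Subtype.val h2
    exact Submodule.mem_span_singleton.mpr ⟨x i0, h3.symm⟩
  · rw [Submodule.span_le, Set.singleton_subset_iff]
    exact hEL
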